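/- arXiv:1704.00502 — 4 statements merged into one kernel-verified Lean document; each statement's English description precedes it below -/
import Mathlib

section
/- Let p and q be odd primes with p ≡ 1 (mod 8) and q ≡ 1 (mod 8), and let k be an integer with Jacobi symbol (k/p) = 1 and (k/q) = -1. Then there is no primitive integer vector (x₁, x₂, x₃, x₄) (i.e., gcd(x₁,x₂,x₃,x₄) = 1) with x₁² - pq·x₂² - x₃·x₄ = 0, x₁ ≡ k (mod pq), x₂ ≡ 0 (mod pq), x₃ ≡ k (mod pq), and x₄ ≡ k (mod pq). -/
private lemma jacobi_aux (P : ℕ) (hm1 : jacobiSym (-1) P = 1) :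
    ∀ n : ℕ, ∀ a : ℤ, a.natAbs ≤ n → a ≠ 0 →
      (∀ r : ℕ, r.Prime → (r : ℤ) ∣ a → jacobiSym (r : ℤ) P = 1) →
      jacobiSym a P = 1 := by
  intro n
  induction n with
  | zero =>
    intro a ha ha0 _
    exact absurd (Int.natAbs_eq_zero.mp (Nat.le_zero.mp ha)) ha0
  | succ n ih =>
    intro a ha ha0 hall
    rcases eq_or_ne a.natAbs 1 with h1 | h1
    · rcases Int.natAbs_eq_iff.mp h1 with rfl | rfl
      · simp
      · simpa using hm1
    · set r := a.natAbs.minFac with hrdef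
      have hrp : r.Prime := Nat.minFac_prime h1
      have hrdvd : (r : ℤ) ∣ a := Int.natCast_dvd.mpr (Nat.minFac_dvd _)
      obtain ⟨c, hc⟩ := hrdvd
      have hc0 : c ≠ 0 := by rintro rfl; simp at hc; exact ha0 hc
      have hlt : c.natAbs ≤ n := by
        have h2 : 2 ≤ r := hrp.two_le
        have hcpos : 0 < c.natAbs := Int.natAbs_pos.mpr hc0
        have habs : a.natAbs = r * c.natAbs := by
          rw [hc, Int.natAbs_mul, Int.natAbs_natCast]
        have h4 : 2 * c.natAbs ≤ a.natAbs := by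
          rw [habs]; exact Nat.mul_le_mul h2 le_rfl
        omega
      rw [hc, jacobiSym.mul_left, hall r hrp ⟨c, hc⟩, one_mul]
      exact ih c hlt hc0 (fun s hs hsd => hall s hs (hsd.trans ⟨(r : ℤ), by rw [hc]; ring⟩))

private lemma descent (p q : ℕ) (hpq8 : (p * q) % 8 = 1) :
    ∀ n : ℕ, ∀ a b x y : ℤ, a.natAbs ≤ n → a ≠ 0 →
      Nat.Coprime a.natAbs (p * q) →
      a * b = x ^ 2 - ((p * q : ℕ) : ℤ) * y ^ 2 →
      (∀ r : ℕ, r.Prime → ¬((r : ℤ) ∣ a ∧ (r : ℤ) ∣ b ∧ (r : ℤ) ∣ x ∧ (r : ℤ) ∣ y)) →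
      jacobiSym a (p * q) = 1 := by
  have hodd : Odd (p * q) := Nat.odd_iff.mpr (by omega)
  have hpq4 : (p * q) % 4 = 1 := by
    have := Nat.mod_mod_of_dvd (p * q) (by norm_num : (4 : ℕ) ∣ 8)
    omega
  have hm1 : jacobiSym (-1) (p * q) = 1 := by
    rw [jacobiSym.at_neg_one hodd, ZMod.χ₄_nat_one_mod_four hpq4]
  have h2 : jacobiSym 2 (p * q) = 1 := by
    rw [jacobiSym.at_two hodd, ZMod.χ₈_nat_eq_if_mod_eight]
    have : (p * q) % 2 = 1 := by omega
    simp [hpq8, this]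
  intro n
  induction n with
  | zero =>
    intro a b x y ha ha0 _ _ _
    exact absurd (Int.natAbs_eq_zero.mp (Nat.le_zero.mp ha)) ha0
  | succ n ih =>
    intro a b x y ha ha0 hacop heq hcop4
    by_cases hall : ∀ r : ℕ, r.Prime → (r : ℤ) ∣ a → jacobiSym (r : ℤ) (p * q) = 1
    · exact jacobi_aux (p * q) hm1 (n + 1) a ha ha0 hall
    · push_neg at hall
      obtain ⟨r, hrp, hrdvd, hrne⟩ := hall
      haveI : Fact r.Prime := ⟨hrp⟩
      have hrpZ : Prime (r : ℤ) := Int.prime_iff_natAbs_prime.mpr (by simpa using hrp)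
      have hrZ0 : (r : ℤ) ≠ 0 := by exact_mod_cast hrp.ne_zero
      have hrnat : r ∣ a.natAbs := Int.natCast_dvd.mp hrdvd
      have hrcop : Nat.Coprime r (p * q) := Nat.Coprime.coprime_dvd_left hrnat hacop
      have hrm1 : jacobiSym (r : ℤ) (p * q) = -1 := by
        rcases jacobiSym.trichotomy (r : ℤ) (p * q) with h | h | h
        · exfalso
          rw [jacobiSym.eq_zero_iff] at h
          exact h.2 (by simpa [Int.gcd, Int.natAbs_mul, Nat.coprime_iff_gcd_eq_one] using hrcop)
        · exact absurd h hrne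
        · exact h
      have hrodd : Odd r := by
        rcases hrp.eq_two_or_odd' with rfl | h
        · exfalso; rw [show ((2 : ℕ) : ℤ) = 2 by norm_num, h2] at hrm1; norm_num at hrm1
        · exact h
      have hrec : jacobiSym ((p * q : ℕ) : ℤ) r = -1 := by
        rw [jacobiSym.quadratic_reciprocity_one_mod_four hpq4 hrodd]; exact hrm1
      have hns : ¬ IsSquare ((((p * q : ℕ) : ℤ)) : ZMod r) :=
        ZMod.nonsquare_of_jacobiSym_eq_neg_one hrec
      have h0 : ((a : ZMod r)) = 0 := (ZMod.intCast_zmod_eq_zero_iff_dvd a r).mpr hrdvd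
      have hcastEq : ((x : ZMod r)) ^ 2 = (((p * q : ℕ) : ℤ) : ZMod r) * (y : ZMod r) ^ 2 := by
        have hc := congrArg (fun z : ℤ => (z : ZMod r)) heq
        simp only [Int.cast_mul, Int.cast_sub, Int.cast_pow] at hc
        rw [h0, zero_mul] at hc
        exact sub_eq_zero.mp hc.symm
      have hy : (r : ℤ) ∣ y := by
        by_contra hy
        have hy0 : ((y : ZMod r)) ≠ 0 := fun h =>
          hy ((ZMod.intCast_zmod_eq_zero_iff_dvd y r).mp h)
        refine hns ⟨(x : ZMod r) * (y : ZMod r)⁻¹, ?_⟩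
        field_simp
        push_cast at hcastEq ⊢
        linear_combination -hcastEq
      have hx : (r : ℤ) ∣ x := by
        apply hrpZ.dvd_of_dvd_pow (n := 2)
        obtain ⟨a', ha'⟩ := hrdvd
        obtain ⟨y', hy'⟩ := hy
        exact ⟨a' * b + ((p * q : ℕ) : ℤ) * (r : ℤ) * y' ^ 2, by
          rw [show x ^ 2 = a * b + ((p * q : ℕ) : ℤ) * y ^ 2 by linarith, ha', hy']; ring⟩
      have hrb : ¬ (r : ℤ) ∣ b := fun hb => hcop4 r hrp ⟨hrdvd, hb, hx, hy⟩
      obtain ⟨x', rfl⟩ := hx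
      obtain ⟨y', rfl⟩ := hy
      obtain ⟨a₁, ha₁⟩ := hrdvd
      have hdvd2 : a * b = (r : ℤ) ^ 2 * (x' ^ 2 - ((p * q : ℕ) : ℤ) * y' ^ 2) := by
        linear_combination heq
      have ha₁b : (r : ℤ) ∣ a₁ * b := by
        refine ⟨x' ^ 2 - ((p * q : ℕ) : ℤ) * y' ^ 2, ?_⟩
        apply mul_left_cancel₀ hrZ0
        rw [show (r:ℤ) * (a₁ * b) = a * b by rw [ha₁]; ring, hdvd2]; ring
      have ha₁r : (r : ℤ) ∣ a₁ := (hrpZ.2.2 a₁ b ha₁b).resolve_right hrb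
      obtain ⟨a₂, rfl⟩ := ha₁r
      have ha20 : a₂ ≠ 0 := by rintro rfl; simp at ha₁; exact ha0 ha₁
      have hnatabs : a.natAbs = r * (r * a₂.natAbs) := by
        rw [ha₁, Int.natAbs_mul, Int.natAbs_mul, Int.natAbs_natCast]
      have hle : a₂.natAbs ≤ n := by
        have h2r : 2 ≤ r := hrp.two_le
        have hpos : 0 < a₂.natAbs := Int.natAbs_pos.mpr ha20
        have h4 : 2 * (2 * a₂.natAbs) ≤ a.natAbs := by
          rw [hnatabs]
          exact Nat.mul_le_mul h2r (Nat.mul_le_mul h2r le_rfl)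
        omega
      have heq2 : a₂ * b = x' ^ 2 - ((p * q : ℕ) : ℤ) * y' ^ 2 := by
        apply mul_left_cancel₀ (pow_ne_zero 2 hrZ0)
        rw [show (r:ℤ) ^ 2 * (a₂ * b) = a * b by rw [ha₁]; ring, hdvd2]
      have hacop2 : Nat.Coprime a₂.natAbs (p * q) := by
        apply Nat.Coprime.coprime_dvd_left _ hacop
        rw [hnatabs]; exact ⟨r * r, by ring⟩
      have hcop4' : ∀ s : ℕ, s.Prime →
          ¬((s : ℤ) ∣ a₂ ∧ (s : ℤ) ∣ b ∧ (s : ℤ) ∣ x' ∧ (s : ℤ) ∣ y') := by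
        rintro s hs ⟨d1, d2, d3, d4⟩
        exact hcop4 s hs ⟨by rw [ha₁]; exact dvd_mul_of_dvd_right (dvd_mul_of_dvd_right d1 _) _,
          d2, dvd_mul_of_dvd_right d3 _, dvd_mul_of_dvd_right d4 _⟩
      have hrec2 := ih a₂ b x' y' hle ha20 hacop2 heq2 hcop4'
      rw [ha₁, jacobiSym.mul_left, jacobiSym.mul_left, hrm1, hrec2]
      ring

/-- Let `p` and `q` be odd primes with `p ≡ q ≡ 1 (mod 8)`, and let `k` be an
integer with Jacobi (Legendre) symbol `(k/p) = 1` and `(k/q) = -1`.  Then there is no primitive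
integer vector `(x₁, x₂, x₃, x₄)` with `x₁² - pq·x₂² - x₃·x₄ = 0`, `x₁ ≡ k`, `x₂ ≡ 0`,
`x₃ ≡ k`, `x₄ ≡ k (mod pq)`. -/
theorem no_primitive_solutions_example_one
    (p q : ℕ) (hp : p.Prime) (hq : q.Prime) (hpodd : Odd p) (hqodd : Odd q)
    (hp8 : p % 8 = 1) (hq8 : q % 8 = 1) (k : ℤ)
    (hkp : jacobiSym k p = 1) (hkq : jacobiSym k q = -1) :
    ¬ ∃ x₁ x₂ x₃ x₄ : ℤ,
        Nat.gcd (Nat.gcd (Nat.gcd x₁.natAbs x₂.natAbs) x₃.natAbs) x₄.natAbs = 1 ∧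
        x₁ ^ 2 - (p * q : ℤ) * x₂ ^ 2 - x₃ * x₄ = 0 ∧
        x₁ ≡ k [ZMOD (p * q : ℕ)] ∧ x₂ ≡ 0 [ZMOD (p * q : ℕ)] ∧
        x₃ ≡ k [ZMOD (p * q : ℕ)] ∧ x₄ ≡ k [ZMOD (p * q : ℕ)] := by
  rintro ⟨x₁, x₂, x₃, x₄, hgcd, hF, h₁, h₂, h₃, h₄⟩
  haveI : NeZero p := ⟨hp.ne_zero⟩
  haveI : NeZero q := ⟨hq.ne_zero⟩
  have hpq8 : (p * q) % 8 = 1 := by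
    rw [Nat.mul_mod, hp8, hq8]
  -- k is coprime to p and q
  have hkp1 : Int.gcd k p = 1 := by
    by_contra hc
    rw [jacobiSym.eq_zero_iff.mpr ⟨hp.ne_zero, hc⟩] at hkp; norm_num at hkp
  have hkq1 : Int.gcd k q = 1 := by
    by_contra hc
    rw [jacobiSym.eq_zero_iff.mpr ⟨hq.ne_zero, hc⟩] at hkq; norm_num at hkq
  -- x₃ is coprime to pq
  obtain ⟨t, ht⟩ : ((p * q : ℕ) : ℤ) ∣ x₃ - k := (h₃.symm).dvd
  have hx₃eq : x₃ = k + ((p * q : ℕ) : ℤ) * t := by linarith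
  have hcp : IsCoprime x₃ (p : ℤ) := by
    rw [hx₃eq, show k + ((p * q : ℕ) : ℤ) * t = k + (p : ℤ) * ((q : ℤ) * t) by push_cast; ring]
    exact (Int.isCoprime_iff_gcd_eq_one.mpr hkp1).add_mul_left_left _
  have hcq : IsCoprime x₃ (q : ℤ) := by
    rw [hx₃eq, show k + ((p * q : ℕ) : ℤ) * t = k + (q : ℤ) * ((p : ℤ) * t) by push_cast; ring]
    exact (Int.isCoprime_iff_gcd_eq_one.mpr hkq1).add_mul_left_left _
  have hcpq : Int.gcd x₃ ((p * q : ℕ) : ℤ) = 1 := by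
    rw [Int.isCoprime_iff_gcd_eq_one.symm]
    push_cast
    exact hcp.mul_right hcq
  have hx₃0 : x₃ ≠ 0 := by
    rintro rfl
    rw [Int.gcd_zero_left, Int.natAbs_natCast] at hcpq
    have := hp.two_le; have := hq.two_le
    nlinarith
  -- apply the descent lemma
  have hjac1 : jacobiSym x₃ (p * q) = 1 := by
    apply descent p q hpq8 x₃.natAbs x₃ x₄ x₁ x₂ le_rfl hx₃0
    · simpa [Int.gcd, Int.natAbs_mul, Nat.coprime_iff_gcd_eq_one] using hcpq
    · push_cast
      linarith [hF]
    · rintro r hr ⟨d3, d4, d1, d2⟩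
      have : r ∣ 1 := by
        rw [← hgcd]
        exact Nat.dvd_gcd (Nat.dvd_gcd (Nat.dvd_gcd (Int.natCast_dvd.mp d1)
          (Int.natCast_dvd.mp d2)) (Int.natCast_dvd.mp d3)) (Int.natCast_dvd.mp d4)
      exact hr.one_lt.ne' (Nat.dvd_one.mp this)
  -- but jacobi symbol of x₃ mod pq is -1
  have hjacm1 : jacobiSym x₃ (p * q) = -1 := by
    rw [jacobiSym.mod_left' h₃, jacobiSym.mul_right, hkp, hkq]
    ring
  rw [hjac1] at hjacm1
  norm_num at hjacm1
end

section
/- There is no primitive integer vector (x₁, x₂, x₃, x₄) with all coordinates positive satisfying x₁² + x₂² - x₃·x₄ = 0 and x₁ ≡ 0, x₂ ≡ 3, x₃ ≡ 3, x₄ ≡ 3 (mod 4). -/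
/-- If `p ≡ 3 mod 4` divides `a² + b²`, then `p ∣ a` and `p ∣ b`. -/
lemma dvd_of_dvd_sq_add_sq {p a b : ℕ} (hp : p.Prime) (hp3 : p % 4 = 3)
    (h : p ∣ a ^ 2 + b ^ 2) : p ∣ a ∧ p ∣ b := by
  haveI : Fact p.Prime := ⟨hp⟩
  have h0 : ((a : ZMod p)) ^ 2 + (b : ZMod p) ^ 2 = 0 := by
    have h' : ((a ^ 2 + b ^ 2 : ℕ) : ZMod p) = 0 :=
      (ZMod.natCast_eq_zero_iff _ _).mpr h
    push_cast at h'
    exact h'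
  by_contra hc
  have hsq : IsSquare (-1 : ZMod p) := by
    rcases Classical.em (p ∣ a) with ha | ha
    · have hb : ¬ p ∣ b := fun hb => hc ⟨ha, hb⟩
      have ha' : (a : ZMod p) = 0 := (ZMod.natCast_eq_zero_iff _ _).mpr ha
      have hb' : (b : ZMod p) ≠ 0 := fun h' => hb ((ZMod.natCast_eq_zero_iff _ _).mp h')
      exfalso
      have hb2 : (b : ZMod p) ^ 2 = 0 := by rw [ha'] at h0; linear_combination h0
      exact hb' (pow_eq_zero_iff (n := 2) (by norm_num) |>.mp hb2)
    · have ha' : (a : ZMod p) ≠ 0 := fun h' => ha ((ZMod.natCast_eq_zero_iff _ _).mp h')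
      refine ⟨(b : ZMod p) * (a : ZMod p)⁻¹, ?_⟩
      have hinv : (a : ZMod p) * (a : ZMod p)⁻¹ = 1 := ZMod.mul_inv_of_unit _ (Ne.isUnit ha')
      have : (b : ZMod p) ^ 2 = -(a : ZMod p) ^ 2 := by linear_combination h0
      calc (-1 : ZMod p) = -((a : ZMod p) * (a : ZMod p)⁻¹) ^ 2 := by rw [hinv]; ring
        _ = (b : ZMod p) * (a : ZMod p)⁻¹ * ((b : ZMod p) * (a : ZMod p)⁻¹) := by
            rw [show (b : ZMod p) * (a : ZMod p)⁻¹ * ((b : ZMod p) * (a : ZMod p)⁻¹)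
                = (b : ZMod p) ^ 2 * ((a : ZMod p)⁻¹) ^ 2 by ring, this]; ring
  rw [ZMod.exists_sq_eq_neg_one_iff] at hsq
  exact hsq hp3

/-- For a prime `p ≡ 3 mod 4`, the `p`-adic valuation of a positive sum of two squares is even. -/
lemma even_factorization_sq_add_sq {p : ℕ} (hp : p.Prime) (hp3 : p % 4 = 3) :
    ∀ n a b : ℕ, a ^ 2 + b ^ 2 = n → 0 < n → Even (n.factorization p) := by
  intro n
  induction n using Nat.strong_induction_on with
  | _ n ih =>
    intro a b hab hn
    rcases Classical.em (p ∣ n) with hdvd | hdvd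
    · obtain ⟨hpa, hpb⟩ := dvd_of_dvd_sq_add_sq hp hp3 (hab ▸ hdvd)
      obtain ⟨a', rfl⟩ := hpa
      obtain ⟨b', rfl⟩ := hpb
      have hp2 : p ^ 2 ∣ n := by
        rw [← hab]
        exact Dvd.dvd.add ⟨a' ^ 2, by ring⟩ ⟨b' ^ 2, by ring⟩
      obtain ⟨m, rfl⟩ := hp2
      have hm : 0 < m := by
        rcases Nat.eq_zero_or_pos m with h | h
        · subst h; simp at hn
        · exact h
      have hab' : a' ^ 2 + b' ^ 2 = m := by
        have hpp : 0 < p ^ 2 := pow_pos hp.pos 2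
        refine Nat.eq_of_mul_eq_mul_left hpp ?_
        rw [← hab]; ring
      have hlt : m < p ^ 2 * m := by
        have h1 : 1 < p ^ 2 := by nlinarith [hp.two_le]
        calc m = 1 * m := (one_mul m).symm
          _ < p ^ 2 * m := (Nat.mul_lt_mul_right hm).mpr h1
      have hrec := ih m hlt a' b' hab' hm
      rw [Nat.factorization_mul (pow_ne_zero _ hp.pos.ne') hm.ne',
        hp.factorization_pow, Finsupp.add_apply, Finsupp.single_eq_same]
      have := Nat.even_iff.mp hrec
      rw [Nat.even_iff]
      omega
    · rw [Nat.factorization_eq_zero_of_not_dvd hdvd]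
      exact Even.zero

/-- Any `n ≡ 3 mod 4` has a prime factor `p ≡ 3 mod 4` with odd multiplicity. -/
lemma exists_prime_three_mod_four_odd_factorization :
    ∀ n : ℕ, n % 4 = 3 → ∃ p, p.Prime ∧ p % 4 = 3 ∧ Odd (n.factorization p) := by
  intro n
  induction n using Nat.strong_induction_on with
  | _ n ih =>
    intro hn
    have hn0 : n ≠ 0 := by omega
    have hn1 : n ≠ 1 := by omega
    set p := n.minFac with hpdef
    have hp : p.Prime := Nat.minFac_prime hn1
    have hpdvd : p ∣ n := Nat.minFac_dvd n
    have hpodd : p % 2 = 1 := by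
      rcases hp.eq_two_or_odd with h2 | h1
      · exfalso; have : (2 : ℕ) ∣ n := h2 ▸ hpdvd; omega
      · exact h1
    have hp4 : p % 4 = 1 ∨ p % 4 = 3 := by omega
    set e := n.factorization p with hedef
    have he1 : 1 ≤ e := (Nat.Prime.factorization_pos_of_dvd hp hn0 hpdvd)
    rcases Classical.em (p % 4 = 3 ∧ Odd e) with ⟨h3, hodd⟩ | hne
    · exact ⟨p, hp, h3, hodd⟩
    · have hpe1 : p ^ e % 4 = 1 := by
        rw [Nat.pow_mod]
        rcases hp4 with h1 | h3
        · rw [h1, one_pow, Nat.one_mod_eq_one.mpr (by norm_num)]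
        · have heeven : Even e := by
            rcases Nat.even_or_odd e with h | h
            · exact h
            · exact absurd ⟨h3, h⟩ hne
          obtain ⟨k, hk⟩ := heeven
          rw [h3, hk, show k + k = 2 * k by ring, pow_mul, Nat.pow_mod]
          norm_num
      set m := n / p ^ e with hmdef
      have hord : p ^ e * m = n := Nat.ordProj_mul_ordCompl_eq_self n p
      have hpm : ¬ p ∣ m := Nat.not_dvd_ordCompl hp hn0
      have hm0 : m ≠ 0 := by
        intro h; rw [h, mul_zero] at hord; exact hn0 hord.symm
      have hm4 : m % 4 = 3 := by
        have h : n % 4 = p ^ e % 4 * (m % 4) % 4 := by rw [← hord, Nat.mul_mod]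
        rw [hpe1] at h
        omega
      have hmlt : m < n := by
        have hpe : 1 < p ^ e := Nat.one_lt_pow (by omega) hp.one_lt
        have hm1 := Nat.pos_of_ne_zero hm0
        nlinarith [hord]
      obtain ⟨q, hq, hq3, hqodd⟩ := ih m hmlt hm4
      refine ⟨q, hq, hq3, ?_⟩
      have hqp : q ≠ p := by
        intro h
        refine hpm (h ▸ Nat.dvd_of_factorization_pos ?_)
        intro h0
        rw [h0] at hqodd
        exact absurd (Nat.odd_iff.mp hqodd) (by omega)
      have : n.factorization q = (p ^ e).factorization q + m.factorization q := by
        rw [← hord, Nat.factorization_mul (pow_ne_zero _ hp.pos.ne') hm0, Finsupp.add_apply]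
      rw [this, hp.factorization_pow, Finsupp.single_eq_of_ne' (fun h => hqp h.symm),
        zero_add]
      exact hqodd

/-- There is no primitive integer vector `(x₁, x₂, x₃, x₄)` with all coordinates
positive satisfying `x₁² + x₂² - x₃·x₄ = 0` and `x₁ ≡ 0`, `x₂ ≡ 3`, `x₃ ≡ 3`, `x₄ ≡ 3 (mod 4)`. -/
theorem no_primitive_solutions_example_two :
    ¬ ∃ x₁ x₂ x₃ x₄ : ℤ,
        0 < x₁ ∧ 0 < x₂ ∧ 0 < x₃ ∧ 0 < x₄ ∧
        Nat.gcd (Nat.gcd (Nat.gcd x₁.natAbs x₂.natAbs) x₃.natAbs) x₄.natAbs = 1 ∧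
        x₁ ^ 2 + x₂ ^ 2 - x₃ * x₄ = 0 ∧
        x₁ ≡ 0 [ZMOD 4] ∧ x₂ ≡ 3 [ZMOD 4] ∧ x₃ ≡ 3 [ZMOD 4] ∧ x₄ ≡ 3 [ZMOD 4] := by
  rintro ⟨x₁, x₂, x₃, x₄, h1, h2, h3, h4, hgcd, heq, _, _, hm3, _⟩
  set a := x₁.natAbs
  set b := x₂.natAbs
  set c := x₃.natAbs
  set d := x₄.natAbs
  have ha : (a : ℤ) = x₁ := Int.natAbs_of_nonneg h1.le
  have hb : (b : ℤ) = x₂ := Int.natAbs_of_nonneg h2.le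
  have hc : (c : ℤ) = x₃ := Int.natAbs_of_nonneg h3.le
  have hd : (d : ℤ) = x₄ := Int.natAbs_of_nonneg h4.le
  have habcd : a ^ 2 + b ^ 2 = c * d := by
    have : (↑(a ^ 2 + b ^ 2) : ℤ) = (↑(c * d) : ℤ) := by
      push_cast
      rw [ha, hb, hc, hd]
      linarith
    exact_mod_cast this
  have hc4 : c % 4 = 3 := by
    have h' : x₃ % 4 = 3 := hm3
    have : (c : ℤ) % 4 = 3 := by rw [hc]; exact h'
    omega
  obtain ⟨p, hp, hp3, hpodd⟩ := exists_prime_three_mod_four_odd_factorization c hc4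
  have hc0 : c ≠ 0 := fun h => by simp [h] at hc4
  have hd0 : d ≠ 0 := by
    intro h
    rw [h] at hd
    exact absurd (hd ▸ h4) (by simp)
  have heven : Even ((c * d).factorization p) :=
    even_factorization_sq_add_sq hp hp3 (c * d) a b habcd
      (Nat.mul_pos (Nat.pos_of_ne_zero hc0) (Nat.pos_of_ne_zero hd0))
  rw [Nat.factorization_mul hc0 hd0, Finsupp.add_apply] at heven
  have hdodd : Odd (d.factorization p) := by
    have h1 := Nat.even_iff.mp heven
    have h2 := Nat.odd_iff.mp hpodd
    rw [Nat.odd_iff]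
    omega
  have hpc : p ∣ c := Nat.dvd_of_factorization_pos (by
    intro h0; rw [h0] at hpodd; exact absurd (Nat.odd_iff.mp hpodd) (by omega))
  have hpd : p ∣ d := Nat.dvd_of_factorization_pos (by
    intro h0; rw [h0] at hdodd; exact absurd (Nat.odd_iff.mp hdodd) (by omega))
  have hpab : p ∣ a ^ 2 + b ^ 2 := habcd ▸ hpc.mul_right d
  obtain ⟨hpa, hpb⟩ := dvd_of_dvd_sq_add_sq hp hp3 hpab
  have hp1 : p ∣ 1 := hgcd ▸ Nat.dvd_gcd (Nat.dvd_gcd (Nat.dvd_gcd hpa hpb) hpc) hpd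
  exact hp.one_lt.ne' (Nat.dvd_one.mp hp1)
end

section
/- Let p, q be distinct odd primes, let x₁, x₂, x₃, x₄ be integers with gcd(x₁,x₂,x₃,x₄) = 1 and x₁² - pq·x₂² = x₃·x₄, and suppose p ∤ x₃ and q ∤ x₃. Then every odd prime r dividing x₃ either satisfies Jacobi symbol (pq/r) = 1 or divides x₃ to an even power. -/
lemma lemA (r : ℕ) [Fact r.Prime] (c a b : ℤ) (hc : ¬ IsSquare ((c : ZMod r)))
    (h : (r : ℤ) ∣ a ^ 2 - c * b ^ 2) : (r : ℤ) ∣ a ∧ (r : ℤ) ∣ b := by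
  have h' : ((a ^ 2 - c * b ^ 2 : ℤ) : ZMod r) = 0 :=
    (ZMod.intCast_zmod_eq_zero_iff_dvd _ _).mpr h
  push_cast at h'
  have heq : (a : ZMod r) ^ 2 = (c : ZMod r) * (b : ZMod r) ^ 2 := by linear_combination h'
  have hb : (b : ZMod r) = 0 := by
    by_contra hb
    refine hc ⟨(a : ZMod r) * (b : ZMod r)⁻¹, ?_⟩
    have h1 : ((b : ZMod r) * (b : ZMod r)⁻¹) = 1 := mul_inv_cancel₀ hb
    calc (c : ZMod r) = (c : ZMod r) * (b : ZMod r) ^ 2 * ((b : ZMod r)⁻¹) ^ 2 := by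
          rw [mul_assoc, ← mul_pow, h1]; ring
      _ = (a : ZMod r) ^ 2 * ((b : ZMod r)⁻¹) ^ 2 := by rw [heq]
      _ = (a : ZMod r) * (b : ZMod r)⁻¹ * ((a : ZMod r) * (b : ZMod r)⁻¹) := by ring
  have ha : (a : ZMod r) = 0 := by
    have : (a : ZMod r) ^ 2 = 0 := by rw [heq, hb]; ring
    exact pow_eq_zero_iff (by norm_num) |>.mp this
  exact ⟨(ZMod.intCast_zmod_eq_zero_iff_dvd _ _).mp ha,
    (ZMod.intCast_zmod_eq_zero_iff_dvd _ _).mp hb⟩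

lemma keyEven (r : ℕ) [hF : Fact r.Prime] (c : ℤ) (hc : ¬ IsSquare ((c : ZMod r))) :
    ∀ n : ℕ, ∀ a b : ℤ, (a ^ 2 - c * b ^ 2).natAbs = n → a ^ 2 - c * b ^ 2 ≠ 0 →
      Even (n.factorization r) := by
  intro n
  induction n using Nat.strong_induction_on with
  | _ n ih =>
    intro a b hab hn
    by_cases hdvd : (r : ℤ) ∣ a ^ 2 - c * b ^ 2
    · obtain ⟨ha, hb⟩ := lemA r c a b hc hdvd
      obtain ⟨a', rfl⟩ := ha
      obtain ⟨b', rfl⟩ := hb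
      have hfac : ((r : ℤ) * a') ^ 2 - c * ((r : ℤ) * b') ^ 2
          = (r : ℤ) ^ 2 * (a' ^ 2 - c * b' ^ 2) := by ring
      rw [hfac] at hn hab
      have hm : a' ^ 2 - c * b' ^ 2 ≠ 0 := fun h => hn (by rw [h, mul_zero])
      have hr2 : (2 : ℕ) ≤ r := hF.out.two_le
      have hlt : (a' ^ 2 - c * b' ^ 2).natAbs < n := by
        rw [← hab, Int.natAbs_mul]
        have h1 : 1 < ((r : ℤ) ^ 2).natAbs := by
          simp only [Int.natAbs_pow, Int.natAbs_natCast]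
          calc 1 < 2 ^ 2 := by norm_num
            _ ≤ r ^ 2 := Nat.pow_le_pow_left hr2 2
        have h0 : 0 < (a' ^ 2 - c * b' ^ 2).natAbs := Int.natAbs_pos.mpr hm
        calc (a' ^ 2 - c * b' ^ 2).natAbs
            = 1 * (a' ^ 2 - c * b' ^ 2).natAbs := (one_mul _).symm
          _ < ((r : ℤ) ^ 2).natAbs * (a' ^ 2 - c * b' ^ 2).natAbs :=
              (Nat.mul_lt_mul_right h0).mpr h1
      have ihm := ih _ hlt a' b' rfl hm
      rw [← hab, Int.natAbs_mul, Nat.factorization_mul (by positivity) (Int.natAbs_ne_zero.mpr hm)]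
      have hrr : (((r : ℤ) ^ 2).natAbs).factorization r = 2 := by
        rw [Int.natAbs_pow, Int.natAbs_natCast, hF.out.factorization_pow, Finsupp.single_eq_same]
      obtain ⟨k, hk⟩ := ihm
      exact ⟨k + 1, by simp only [Finsupp.coe_add, Pi.add_apply, hrr]; omega⟩
    · have hnd : ¬ r ∣ n := by
        rw [← hab]
        intro h
        exact hdvd (Int.natCast_dvd.mpr h)
      simp [Nat.factorization_eq_zero_of_not_dvd hnd]


/-- Let `p, q` be distinct odd primes and `x₁,…,x₄` integers with
`gcd(x₁,x₂,x₃,x₄) = 1`, `x₁² - pq·x₂² = x₃·x₄`, `p ∤ x₃` and `q ∤ x₃`.  Then every odd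
prime `r` dividing `x₃` either satisfies `(pq/r) = 1` (Jacobi symbol) or divides `x₃` to
an even power. -/
theorem odd_prime_factor_of_x3_qr_or_even_valuation
    (p q : ℕ) (hp : p.Prime) (hq : q.Prime) (hpodd : Odd p) (hqodd : Odd q) (hpq : p ≠ q)
    (x₁ x₂ x₃ x₄ : ℤ)
    (hgcd : Nat.gcd (Nat.gcd (Nat.gcd x₁.natAbs x₂.natAbs) x₃.natAbs) x₄.natAbs = 1)
    (heq : x₁ ^ 2 - (p * q : ℤ) * x₂ ^ 2 = x₃ * x₄)
    (hpx : ¬ (p : ℤ) ∣ x₃) (hqx : ¬ (q : ℤ) ∣ x₃)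
    (r : ℕ) (hr : r.Prime) (hrodd : Odd r) (hrdvd : (r : ℤ) ∣ x₃) :
    jacobiSym (p * q : ℤ) r = 1 ∨ Even (x₃.natAbs.factorization r) := by
  haveI : Fact r.Prime := ⟨hr⟩
  by_cases hx3 : x₃ = 0
  · right; simp [hx3]
  have hrp : r ≠ p := fun h => hpx (h ▸ hrdvd)
  have hrq : r ≠ q := fun h => hqx (h ▸ hrdvd)
  have hrpq : ¬ r ∣ p * q := by
    intro h
    rcases hr.dvd_mul.mp h with h' | h'
    · exact hrp ((Nat.prime_dvd_prime_iff_eq hr hp).mp h')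
    · exact hrq ((Nat.prime_dvd_prime_iff_eq hr hq).mp h')
  have hne : ((p * q : ℤ) : ZMod r) ≠ 0 := by
    rw [Ne, ZMod.intCast_zmod_eq_zero_iff_dvd]
    exact_mod_cast fun h => hrpq (Int.ofNat_dvd.mp (by exact_mod_cast h))
  by_cases hsq : IsSquare (((p * q : ℤ) : ZMod r))
  · left
    rw [← jacobiSym.legendreSym.to_jacobiSym]
    exact (legendreSym.eq_one_iff r hne).mpr hsq
  · right
    -- r divides x₁ and x₂
    have hdvd13 : (r : ℤ) ∣ x₁ ^ 2 - (p * q : ℤ) * x₂ ^ 2 := heq ▸ hrdvd.mul_right x₄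
    obtain ⟨h1, h2⟩ := lemA r (p * q : ℤ) x₁ x₂ hsq hdvd13
    -- r does not divide x₄
    have h4 : ¬ (r : ℤ) ∣ x₄ := by
      intro h4
      have : r ∣ Nat.gcd (Nat.gcd (Nat.gcd x₁.natAbs x₂.natAbs) x₃.natAbs) x₄.natAbs :=
        Nat.dvd_gcd (Nat.dvd_gcd (Nat.dvd_gcd (Int.natCast_dvd.mp h1)
          (Int.natCast_dvd.mp h2))
          (Int.natCast_dvd.mp hrdvd))
          (Int.natCast_dvd.mp h4)
      rw [hgcd] at this
      exact hr.one_lt.ne' (Nat.dvd_one.mp this)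
    have hx4 : x₄ ≠ 0 := fun h => h4 (h ▸ dvd_zero _)
    have hn : x₁ ^ 2 - (p * q : ℤ) * x₂ ^ 2 ≠ 0 := heq ▸ mul_ne_zero hx3 hx4
    have hkey := keyEven r (p * q : ℤ) hsq _ x₁ x₂ rfl hn
    rw [heq, Int.natAbs_mul,
      Nat.factorization_mul (Int.natAbs_ne_zero.mpr hx3) (Int.natAbs_ne_zero.mpr hx4)] at hkey
    have h4n : x₄.natAbs.factorization r = 0 := by
      apply Nat.factorization_eq_zero_of_not_dvd
      intro h
      exact h4 (Int.natCast_dvd.mpr h)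
    simpa [h4n] using hkey
end

section
/- With notation as before, if c = 0 then S_q(0; m, k) is multiplicative in q: for coprime q₁, q₂ with gcd(m, q₁) = 1 (q₁ coprime to m), S_{q₁q₂}(0; m, k) = S_{q₁}(0; m, k) · S_{q₂}(0; m, k). -/
open Finset

/-- `e_q(x) = exp(2πi x / q)`. -/
noncomputable def eN (q : ℕ) (x : ℤ) : ℂ :=
  Complex.exp (2 * Real.pi * Complex.I * (x : ℂ) / (q : ℂ))

/-- The complete exponential sum
`S_q(c; m, k) = Σ_{a mod q, (a,q)=1} Σ_{b mod q} e_q(a·F(m·b + k) + c·b)`. -/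
noncomputable def Sexp (F : MvPolynomial (Fin 4) ℤ) (q m : ℕ) (c k : Fin 4 → ℤ) : ℂ :=
  ∑ a ∈ (Finset.range q).filter (fun a => Nat.gcd a q = 1),
    ∑ b ∈ Fintype.piFinset (fun _ : Fin 4 => Finset.range q),
      eN q ((a : ℤ) * MvPolynomial.eval (fun i => (m : ℤ) * (b i : ℤ) + k i) F
        + ∑ i, c i * (b i : ℤ))

lemma eN_congr {q : ℕ} (hq : q ≠ 0) {x y : ℤ} (h : x ≡ y [ZMOD (q:ℤ)]) : eN q x = eN q y := by
  obtain ⟨t, ht⟩ := h.dvd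
  have hqC : (q:ℂ) ≠ 0 := Nat.cast_ne_zero.mpr hq
  have hy : (y : ℂ) = (x : ℂ) + (q : ℂ) * (t : ℂ) := by
    have : (y : ℤ) = x + q * t := by linarith
    exact_mod_cast congrArg (Int.cast : ℤ → ℂ) this
  unfold eN
  rw [show 2 * Real.pi * Complex.I * (y:ℂ) / q
      = 2 * Real.pi * Complex.I * (x:ℂ) / q + (t:ℂ) * (2 * Real.pi * Complex.I) by
    field_simp [hy]; linear_combination hy]
  rw [Complex.exp_add, Complex.exp_int_mul_two_pi_mul_I, mul_one]

lemma eN_split {q₁ q₂ : ℕ} (h1 : q₁ ≠ 0) (h2 : q₂ ≠ 0) {A B : ℤ}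
    (hAB : (q₁ : ℤ) * A + (q₂ : ℤ) * B = 1) (x : ℤ) :
    eN (q₁ * q₂) x = eN q₁ (B * x) * eN q₂ (A * x) := by
  have h1C : (q₁:ℂ) ≠ 0 := Nat.cast_ne_zero.mpr h1
  have h2C : (q₂:ℂ) ≠ 0 := Nat.cast_ne_zero.mpr h2
  have hABC : (q₁ : ℂ) * (A : ℂ) + (q₂ : ℂ) * (B : ℂ) = 1 := by exact_mod_cast hAB
  unfold eN
  rw [← Complex.exp_add]
  congr 1
  push_cast
  field_simp
  linear_combination (-(x:ℂ)) * hABC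



lemma eval_ringHom_comm {R S : Type*} [CommSemiring R] [CommSemiring S] (φ : R →+* S)
    (g : Fin 4 → R) (p : MvPolynomial (Fin 4) R) :
    φ (MvPolynomial.eval g p) = MvPolynomial.eval (fun i => φ (g i)) (MvPolynomial.map φ p) := by
  rw [MvPolynomial.eval_map, show MvPolynomial.eval g p = MvPolynomial.eval₂ (RingHom.id R) g p
    from rfl, MvPolynomial.eval₂_comp_left φ, RingHom.comp_id]
  rfl

/-- the polynomial value in `ZMod q` -/
noncomputable def Qz (F : MvPolynomial (Fin 4) ℤ) (q m : ℕ) (k : Fin 4 → ℤ)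
    (v : Fin 4 → ZMod q) : ZMod q :=
  MvPolynomial.eval (fun i => (m : ZMod q) * v i + (k i : ZMod q))
    (MvPolynomial.map (Int.castRingHom (ZMod q)) F)

lemma Qz_cast (F : MvPolynomial (Fin 4) ℤ) (q m : ℕ) (k : Fin 4 → ℤ) (b : Fin 4 → ℤ) :
    ((MvPolynomial.eval (fun i => (m : ℤ) * b i + k i) F : ℤ) : ZMod q)
      = Qz F q m k (fun i => ((b i : ℤ) : ZMod q)) := by
  rw [show ((MvPolynomial.eval (fun i => (m : ℤ) * b i + k i) F : ℤ) : ZMod q)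
      = Int.castRingHom (ZMod q) (MvPolynomial.eval (fun i => (m : ℤ) * b i + k i) F) from rfl,
    eval_ringHom_comm]
  unfold Qz
  have : (fun i => Int.castRingHom (ZMod q) ((m : ℤ) * b i + k i))
      = (fun i => (m : ZMod q) * ((b i : ℤ) : ZMod q) + (k i : ZMod q)) := by
    funext i; rw [eq_intCast]; push_cast; ring
  rw [this]

/-- castHom naturality for Qz -/
lemma Qz_castHom {q q' : ℕ} (h : q' ∣ q) (F : MvPolynomial (Fin 4) ℤ) (m : ℕ) (k : Fin 4 → ℤ)
    (v : Fin 4 → ZMod q) :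
    ZMod.castHom h (ZMod q') (Qz F q m k v)
      = Qz F q' m k (fun i => ZMod.castHom h (ZMod q') (v i)) := by
  unfold Qz
  rw [eval_ringHom_comm (ZMod.castHom h (ZMod q')), MvPolynomial.map_map,
    show (ZMod.castHom h (ZMod q')).comp (Int.castRingHom (ZMod q)) = Int.castRingHom (ZMod q')
      from RingHom.ext_int _ _]
  have : (fun i => ZMod.castHom h (ZMod q') ((m : ZMod q) * v i + (k i : ZMod q)))
       = (fun i => (m : ZMod q') * (ZMod.castHom h (ZMod q') (v i)) + (k i : ZMod q')) := by
    funext i; simp only [map_add, map_mul, map_natCast, map_intCast]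
  rw [this]


noncomputable def Texp (F : MvPolynomial (Fin 4) ℤ) (q m : ℕ) [NeZero q] (k : Fin 4 → ℤ)
    (c : ℤ) : ℂ :=
  ∑ u : (ZMod q)ˣ, ∑ v : Fin 4 → ZMod q,
    eN q (c * (((u : ZMod q) * Qz F q m k v).val : ℤ))

lemma Sexp_eq_Texp (F : MvPolynomial (Fin 4) ℤ) (q m : ℕ) [NeZero q] (k : Fin 4 → ℤ) :
    Sexp F q m (fun _ => 0) k = Texp F q m k 1 := by
  unfold Sexp Texp
  rw [show (∑ u : (ZMod q)ˣ, ∑ v : Fin 4 → ZMod q,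
      eN q (1 * (((u : ZMod q) * Qz F q m k v).val : ℤ)))
    = ∑ u ∈ (Finset.univ : Finset (ZMod q)ˣ), ∑ v ∈ Fintype.piFinset
        (fun _ : Fin 4 => (Finset.univ : Finset (ZMod q))),
      eN q (1 * (((u : ZMod q) * Qz F q m k v).val : ℤ)) by
    simp [Fintype.piFinset_univ]]
  refine Finset.sum_bij' (fun a ha => ZMod.unitOfCoprime a (Finset.mem_filter.mp ha).2)
    (fun u _ => (u : ZMod q).val) (fun a ha => Finset.mem_univ _) ?_ ?_ ?_ ?_
  · intro u _
    refine Finset.mem_filter.mpr ⟨Finset.mem_range.mpr (ZMod.val_lt _), ZMod.val_coe_unit_coprime u⟩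
  · intro a ha
    rw [ZMod.coe_unitOfCoprime, ZMod.val_cast_of_lt (Finset.mem_range.mp (Finset.mem_filter.mp ha).1)]
  · intro u _
    exact Units.ext (by rw [ZMod.coe_unitOfCoprime, ZMod.natCast_zmod_val])
  · intro a ha
    refine Finset.sum_bij' (fun b hb => fun i => ((b i : ℕ) : ZMod q))
      (fun v _ => fun i => (v i).val) (fun b hb => Finset.mem_univ _) ?_ ?_ ?_ ?_
    · intro v _
      exact Fintype.mem_piFinset.mpr (fun i => Finset.mem_range.mpr (ZMod.val_lt _))
    · intro b hb
      funext i
      exact ZMod.val_cast_of_lt (Finset.mem_range.mp (Fintype.mem_piFinset.mp hb i))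
    · intro v _
      funext i
      exact ZMod.natCast_zmod_val _
    · intro b hb
      simp only [zero_mul, Finset.sum_const_zero, add_zero]
      apply eN_congr (NeZero.ne q)
      refine (ZMod.intCast_eq_intCast_iff _ _ _).mp ?_
      push_cast
      rw [Qz_cast]
      rw [ZMod.natCast_zmod_val, ZMod.coe_unitOfCoprime]
      norm_cast
      rw [one_mul]

lemma Texp_unit (F : MvPolynomial (Fin 4) ℤ) (q m : ℕ) [NeZero q] (k : Fin 4 → ℤ) {c : ℤ}
    (hc : IsUnit ((c : ZMod q))) : Texp F q m k c = Texp F q m k 1 := by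
  unfold Texp
  refine Fintype.sum_equiv (Equiv.mulLeft hc.unit) _ _ (fun u => ?_)
  refine Finset.sum_congr rfl (fun v _ => ?_)
  apply eN_congr (NeZero.ne q)
  refine (ZMod.intCast_eq_intCast_iff _ _ _).mp ?_
  push_cast
  rw [ZMod.natCast_zmod_val, ZMod.natCast_zmod_val]
  simp only [Equiv.coe_mulLeft, Units.val_mul, IsUnit.unit_spec, one_mul]
  ring

section CRT

variable {q₁ q₂ : ℕ}

lemma crt_hom_bijective (hq : Nat.Coprime q₁ q₂) :
    Function.Bijective (fun x : ZMod (q₁ * q₂) =>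
      ((ZMod.castHom (dvd_mul_right q₁ q₂) (ZMod q₁) x,
        ZMod.castHom (dvd_mul_left q₂ q₁) (ZMod q₂) x) : ZMod q₁ × ZMod q₂)) := by
  have h : (fun x : ZMod (q₁ * q₂) =>
      ((ZMod.castHom (dvd_mul_right q₁ q₂) (ZMod q₁) x,
        ZMod.castHom (dvd_mul_left q₂ q₁) (ZMod q₂) x) : ZMod q₁ × ZMod q₂))
      = ⇑(ZMod.chineseRemainder hq) := by
    funext x
    have h2 : (ZMod.chineseRemainder hq) x
        = ZMod.castHom (show Nat.lcm q₁ q₂ ∣ q₁ * q₂ by simp [Nat.lcm_dvd_iff])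
          (ZMod q₁ × ZMod q₂) x := rfl
    rw [h2, ZMod.castHom_apply, ZMod.castHom_apply, ZMod.castHom_apply]
    exact Prod.ext (Prod.fst_zmod_cast _).symm (Prod.snd_zmod_cast _).symm
  rw [h]
  exact (ZMod.chineseRemainder hq).toEquiv.bijective

lemma crt_units_bijective (hq : Nat.Coprime q₁ q₂) :
    Function.Bijective (fun u : (ZMod (q₁ * q₂))ˣ =>
      ((Units.map (ZMod.castHom (dvd_mul_right q₁ q₂) (ZMod q₁)).toMonoidHom u,
        Units.map (ZMod.castHom (dvd_mul_left q₂ q₁) (ZMod q₂)).toMonoidHom u) :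
        (ZMod q₁)ˣ × (ZMod q₂)ˣ)) := by
  constructor
  · intro u v h
    rw [Prod.ext_iff] at h
    have h1 : ZMod.castHom (dvd_mul_right q₁ q₂) (ZMod q₁) (u : ZMod (q₁*q₂))
        = ZMod.castHom (dvd_mul_right q₁ q₂) (ZMod q₁) (v : ZMod (q₁*q₂)) := by
      have := congrArg (Units.val) h.1; simpa using this
    have h2 : ZMod.castHom (dvd_mul_left q₂ q₁) (ZMod q₂) (u : ZMod (q₁*q₂))
        = ZMod.castHom (dvd_mul_left q₂ q₁) (ZMod q₂) (v : ZMod (q₁*q₂)) := by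
      have := congrArg (Units.val) h.2; simpa using this
    exact Units.ext ((crt_hom_bijective hq).1 (Prod.ext h1 h2))
  · rintro ⟨w₁, w₂⟩
    obtain ⟨x, hx⟩ := (crt_hom_bijective hq).2 ((w₁ : ZMod q₁), (w₂ : ZMod q₂))
    obtain ⟨y, hy⟩ := (crt_hom_bijective hq).2 ((w₁⁻¹ : (ZMod q₁)ˣ), ((w₂⁻¹ : (ZMod q₂)ˣ) : ZMod q₂))
    simp only [Prod.mk.injEq] at hx hy
    have hxy : x * y = 1 := by
      apply (crt_hom_bijective hq).1
      refine Prod.ext ?_ ?_ <;>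
        simp only [map_mul, map_one, hx.1, hx.2, hy.1, hy.2, Units.mul_inv]
    have hyx : y * x = 1 := by rw [mul_comm y x]; exact hxy
    refine ⟨⟨x, y, hxy, hyx⟩, ?_⟩
    exact Prod.ext (Units.ext (by simpa using hx.1)) (Units.ext (by simpa using hx.2))

lemma crt_pi_bijective (hq : Nat.Coprime q₁ q₂) :
    Function.Bijective (fun v : Fin 4 → ZMod (q₁ * q₂) =>
      (((fun i => ZMod.castHom (dvd_mul_right q₁ q₂) (ZMod q₁) (v i)),
        (fun i => ZMod.castHom (dvd_mul_left q₂ q₁) (ZMod q₂) (v i))) :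
        (Fin 4 → ZMod q₁) × (Fin 4 → ZMod q₂))) := by
  constructor
  · intro v w h
    rw [Prod.ext_iff] at h
    funext i
    apply (crt_hom_bijective hq).1
    exact Prod.ext (congrFun h.1 i) (congrFun h.2 i)
  · rintro ⟨w₁, w₂⟩
    choose x hx using fun i => (crt_hom_bijective hq).2 (w₁ i, w₂ i)
    refine ⟨x, Prod.ext ?_ ?_⟩
    · funext i; exact congrArg Prod.fst (hx i)
    · funext i; exact congrArg Prod.snd (hx i)

end CRT

instance neZeroMulNat {q₁ q₂ : ℕ} [NeZero q₁] [NeZero q₂] : NeZero (q₁ * q₂) :=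
  ⟨mul_ne_zero (NeZero.ne q₁) (NeZero.ne q₂)⟩

lemma Texp_mul (F : MvPolynomial (Fin 4) ℤ) (m : ℕ) (k : Fin 4 → ℤ) {q₁ q₂ : ℕ}
    [NeZero q₁] [NeZero q₂] (hq : Nat.Coprime q₁ q₂) {A B : ℤ}
    (hAB : (q₁ : ℤ) * A + (q₂ : ℤ) * B = 1) :
    Texp F (q₁ * q₂) m k 1 = Texp F q₁ m k B * Texp F q₂ m k A := by
  have hcast1 : ∀ w : ZMod (q₁ * q₂),
      ((w.val : ℕ) : ZMod q₁) = ZMod.castHom (dvd_mul_right q₁ q₂) (ZMod q₁) w := fun w => by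
    rw [← map_natCast (ZMod.castHom (dvd_mul_right q₁ q₂) (ZMod q₁)) w.val,
      ZMod.natCast_zmod_val]
  have hcast2 : ∀ w : ZMod (q₁ * q₂),
      ((w.val : ℕ) : ZMod q₂) = ZMod.castHom (dvd_mul_left q₂ q₁) (ZMod q₂) w := fun w => by
    rw [← map_natCast (ZMod.castHom (dvd_mul_left q₂ q₁) (ZMod q₂)) w.val,
      ZMod.natCast_zmod_val]
  unfold Texp
  rw [← Fintype.sum_prod_type', ← Fintype.sum_prod_type', ← Fintype.sum_prod_type',
    Finset.sum_mul_sum, ← Fintype.sum_prod_type']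
  refine Fintype.sum_bijective
    (fun p : (ZMod (q₁ * q₂))ˣ × (Fin 4 → ZMod (q₁ * q₂)) =>
      (((Units.map (ZMod.castHom (dvd_mul_right q₁ q₂) (ZMod q₁)).toMonoidHom p.1,
          fun i => ZMod.castHom (dvd_mul_right q₁ q₂) (ZMod q₁) (p.2 i)),
        (Units.map (ZMod.castHom (dvd_mul_left q₂ q₁) (ZMod q₂)).toMonoidHom p.1,
          fun i => ZMod.castHom (dvd_mul_left q₂ q₁) (ZMod q₂) (p.2 i))) :
        ((ZMod q₁)ˣ × (Fin 4 → ZMod q₁)) × ((ZMod q₂)ˣ × (Fin 4 → ZMod q₂)))) ?_ _ _ ?_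
  · have hcomp : (fun p : (ZMod (q₁ * q₂))ˣ × (Fin 4 → ZMod (q₁ * q₂)) =>
      (((Units.map (ZMod.castHom (dvd_mul_right q₁ q₂) (ZMod q₁)).toMonoidHom p.1,
          fun i => ZMod.castHom (dvd_mul_right q₁ q₂) (ZMod q₁) (p.2 i)),
        (Units.map (ZMod.castHom (dvd_mul_left q₂ q₁) (ZMod q₂)).toMonoidHom p.1,
          fun i => ZMod.castHom (dvd_mul_left q₂ q₁) (ZMod q₂) (p.2 i))) :
        ((ZMod q₁)ˣ × (Fin 4 → ZMod q₁)) × ((ZMod q₂)ˣ × (Fin 4 → ZMod q₂))))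
      = (Equiv.prodProdProdComm ((ZMod q₁)ˣ) ((ZMod q₂)ˣ) (Fin 4 → ZMod q₁) (Fin 4 → ZMod q₂))
        ∘ (Prod.map
          (fun u : (ZMod (q₁ * q₂))ˣ =>
            ((Units.map (ZMod.castHom (dvd_mul_right q₁ q₂) (ZMod q₁)).toMonoidHom u,
              Units.map (ZMod.castHom (dvd_mul_left q₂ q₁) (ZMod q₂)).toMonoidHom u) :
              (ZMod q₁)ˣ × (ZMod q₂)ˣ))
          (fun v : Fin 4 → ZMod (q₁ * q₂) =>
            (((fun i => ZMod.castHom (dvd_mul_right q₁ q₂) (ZMod q₁) (v i)),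
              (fun i => ZMod.castHom (dvd_mul_left q₂ q₁) (ZMod q₂) (v i))) :
              (Fin 4 → ZMod q₁) × (Fin 4 → ZMod q₂)))) := rfl
    rw [hcomp]
    exact (Equiv.prodProdProdComm _ _ _ _).bijective.comp
      ((crt_units_bijective hq).prodMap (crt_pi_bijective hq))
  · rintro ⟨u, v⟩
    dsimp only
    rw [one_mul, eN_split (NeZero.ne q₁) (NeZero.ne q₂) hAB]
    congr 1
    · apply eN_congr (NeZero.ne q₁)
      refine (ZMod.intCast_eq_intCast_iff _ _ _).mp ?_
      push_cast
      rw [hcast1, ZMod.natCast_zmod_val]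
      congr 1
      rw [map_mul, Qz_castHom]
      simp [Units.coe_map]
    · apply eN_congr (NeZero.ne q₂)
      refine (ZMod.intCast_eq_intCast_iff _ _ _).mp ?_
      push_cast
      rw [hcast2, ZMod.natCast_zmod_val]
      congr 1
      rw [map_mul, Qz_castHom]
      simp [Units.coe_map]

/-- For `c = 0` the sum `S_q(0; m, k)` is multiplicative in `q`: for coprime
`q₁, q₂` with `q₁` coprime to `m`,
`S_{q₁q₂}(0; m, k) = S_{q₁}(0; m, k) · S_{q₂}(0; m, k)`. -/
theorem Sexp_zero_multiplicative
    (F : MvPolynomial (Fin 4) ℤ) (m : ℕ) (hm : 1 ≤ m) (k : Fin 4 → ℤ)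
    (q₁ q₂ : ℕ) (hq₁ : 0 < q₁) (hq₂ : 0 < q₂)
    (hq : Nat.Coprime q₁ q₂) (hmq : Nat.Coprime m q₁) :
    Sexp F (q₁ * q₂) m (fun _ => 0) k
      = Sexp F q₁ m (fun _ => 0) k * Sexp F q₂ m (fun _ => 0) k := by
  haveI : NeZero q₁ := ⟨hq₁.ne'⟩
  haveI : NeZero q₂ := ⟨hq₂.ne'⟩
  have hAB : (q₁ : ℤ) * (Nat.gcdA q₁ q₂) + (q₂ : ℤ) * (Nat.gcdB q₁ q₂) = 1 := by
    have h := Nat.gcd_eq_gcd_ab q₁ q₂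
    rw [hq.gcd_eq_one] at h
    exact_mod_cast h.symm
  have hB : IsUnit (((Nat.gcdB q₁ q₂ : ℤ) : ZMod q₁)) := by
    apply IsUnit.of_mul_eq_one (((q₂ : ℤ) : ZMod q₁))
    have h := congrArg (fun z : ℤ => ((z : ZMod q₁))) hAB
    push_cast at h
    rw [ZMod.natCast_self] at h
    push_cast
    linear_combination h
  have hA : IsUnit (((Nat.gcdA q₁ q₂ : ℤ) : ZMod q₂)) := by
    apply IsUnit.of_mul_eq_one (((q₁ : ℤ) : ZMod q₂))
    have h := congrArg (fun z : ℤ => ((z : ZMod q₂))) hAB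
    push_cast at h
    rw [ZMod.natCast_self] at h
    push_cast
    linear_combination h
  rw [Sexp_eq_Texp F (q₁ * q₂) m k, Sexp_eq_Texp F q₁ m k, Sexp_eq_Texp F q₂ m k,
    Texp_mul F m k hq hAB, Texp_unit _ _ _ _ hB, Texp_unit _ _ _ _ hA]
end
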